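/- For every (finite) tree T and every list assignment {L_v}_{v ∈ V(T)} with |L_v| ≥ 8 for every vertex v, there exists a coloring f of T with f(v) ∈ L_v for every vertex v that is x^3-free, i.e., no simple path v_1, …, v_{3h} in T (h ≥ 1) has a color sequence consisting of three identical consecutive blocks: (f(v_1), …, f(v_h)) = (f(v_{h+1}), …, f(v_{2h})) = (f(v_{2h+1}), …, f(v_{3h})). -/

import Mathlib

/-!
Root the tree at `r`; the root word of a vertex lists the colours along its path to `r`, starting
at the vertex. A path coloured `xxx` with `|x| = h` turns at its vertex closest to `r`, so from one
of its ends it follows the root path for more than `h + ⌊h/2⌋` vertices. It therefore suffices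
that no root word begins with a factor of period `h` and length `h + ⌊h/2⌋ + 1`.

Colours are chosen greedily from the root outwards, keeping the potential
`Σ_{h ≥ 2} 2^{r_h} / 2^{⌊h/2⌋} ≤ 4`, where `r_h ≤ ⌊h/2⌋` is the length of the current run of
period `h`. A complete run contributes `1`, so at most `4 + 1` colours are forbidden (the extra
one is the parent's colour). For each period only one colour continues its run, and its term then
at most doubles, or becomes `2 / 2^{⌊h/2⌋}` if the run was empty; so the potentials of the at
least three admissible colours sum to at most `2 · 4 + Σ_{h ≥ 2} 2 / 2^{⌊h/2⌋} = 12`.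
-/

/-- A coloring `f` of a graph `G` is `x³`-free if no simple path `v₁, …, v_{3h}`
(`h ≥ 1`) has a color sequence consisting of three identical consecutive blocks,
i.e., no simple path has a color sequence of the form `x ++ x ++ x` with `x`
nonempty. -/
def XCubeFree {V : Type} (G : SimpleGraph V) (f : V → ℕ) : Prop :=
  ∀ (u w : V) (p : G.Walk u w), p.IsPath →
    ∀ x : List ℕ, x ≠ [] → p.support.map f ≠ x ++ x ++ x

namespace List

variable {α : Type*} [DecidableEq α]

def commonPrefixLength : List α → List α → ℕ
  | a :: s, b :: t => if a = b then commonPrefixLength s t + 1 else 0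
  | _, _ => 0

@[simp]
theorem commonPrefixLength_nil_right (s : List α) : commonPrefixLength s [] = 0 := by
  cases s <;> rfl

theorem length_le_commonPrefixLength {t s s' : List α} (hs : t <+: s) (hs' : t <+: s') :
    t.length ≤ commonPrefixLength s s' := by
  induction t generalizing s s' with
  | nil => simp
  | cons a t ih =>
    obtain ⟨u, rfl⟩ := hs
    obtain ⟨u', rfl⟩ := hs'
    simp [commonPrefixLength, ih (prefix_append t u) (prefix_append t u')]

theorem commonPrefixLength_cons_drop_succ (a : α) (w : List α) (i : ℕ) :
    commonPrefixLength (a :: w) ((a :: w).drop (i + 1)) =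
      if w[i]? = some a then commonPrefixLength w (w.drop (i + 1)) + 1 else 0 := by
  rw [drop_succ_cons]
  rcases lt_or_ge i w.length with hi | hi
  · rw [drop_eq_getElem_cons hi, getElem?_eq_getElem hi]
    by_cases h : a = w[i] <;> simp [commonPrefixLength, h, eq_comm]
  · simp [drop_eq_nil_of_le hi, getElem?_eq_none hi]

/-- `w` has a prefix of period `p` and length `p + ⌊p/2⌋ + 1`. -/
def HasLongPeriodicPrefix (w : List α) : Prop :=
  ∃ p, 0 < p ∧ p / 2 < commonPrefixLength w (w.drop p)

theorem not_hasLongPeriodicPrefix_nil : ¬([] : List α).HasLongPeriodicPrefix := by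
  simp [HasLongPeriodicPrefix, commonPrefixLength]

theorem hasLongPeriodicPrefix_of_prefix_cube {x y w : List α} (hyx : y <+: x ++ x ++ x)
    (hyw : y <+: w) (hlen : x.length + x.length / 2 < y.length) : w.HasLongPeriodicPrefix := by
  have hy := hyx.length_le
  simp only [length_append] at hy
  refine ⟨x.length, by omega, ?_⟩
  have hshift : y.drop x.length <+: y := by
    refine prefix_of_prefix_length_le ?_ hyx (by simp)
    calc y.drop x.length <+: (x ++ x ++ x).drop x.length := hyx.drop _
      _ = x ++ x := by rw [append_assoc, drop_left' rfl]
      _ <+: x ++ x ++ x := prefix_append _ _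
  have := length_le_commonPrefixLength (hshift.trans hyw) (hyw.drop x.length)
  simp only [length_drop] at this
  omega

def periodRun (w : List α) (p : ℕ) : ℕ := min (commonPrefixLength w (w.drop p)) (p / 2)

theorem periodRun_eq_zero_of_length_le {w : List α} {p : ℕ} (h : w.length ≤ p) :
    w.periodRun p = 0 := by
  simp [periodRun, drop_eq_nil_of_le h]

theorem periodRun_cons (a : α) (w : List α) (i : ℕ) :
    (a :: w).periodRun (i + 1) =
      if w[i]? = some a then min (w.periodRun (i + 1) + 1) ((i + 1) / 2) else 0 := by
  unfold periodRun
  rw [commonPrefixLength_cons_drop_succ]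
  split_ifs <;> omega

theorem exists_of_hasLongPeriodicPrefix_cons {a : α} {w : List α}
    (h : (a :: w).HasLongPeriodicPrefix) :
    ∃ i, w[i]? = some a ∧ w.periodRun (i + 1) = (i + 1) / 2 := by
  obtain ⟨p, hp, hlt⟩ := h
  obtain ⟨i, rfl⟩ : ∃ i, p = i + 1 := ⟨p - 1, by omega⟩
  rw [commonPrefixLength_cons_drop_succ] at hlt
  split_ifs at hlt with hi
  · exact ⟨i, hi, by unfold periodRun; omega⟩
  · omega

end List

noncomputable def runWeight (r q : ℕ) : ℝ := if r = 0 then 0 else 2 ^ r / 2 ^ q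

theorem runWeight_nonneg (r q : ℕ) : 0 ≤ runWeight r q := by
  unfold runWeight
  split_ifs <;> positivity

@[simp]
theorem runWeight_zero_left (q : ℕ) : runWeight 0 q = 0 := if_pos rfl

theorem runWeight_self {q : ℕ} (hq : q ≠ 0) : runWeight q q = 1 := by
  simp [runWeight, hq]

theorem runWeight_min_succ_le (r q : ℕ) :
    runWeight (min (r + 1) q) q ≤ 2 * runWeight r q + 2 / 2 ^ q := by
  calc runWeight (min (r + 1) q) q ≤ 2 * 2 ^ r / 2 ^ q := by
        unfold runWeight
        split_ifs
        · positivity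
        · rw [← pow_succ']
          gcongr
          · norm_num
          · exact min_le_left _ _
    _ ≤ 2 * runWeight r q + 2 / 2 ^ q := by
        rcases Nat.eq_zero_or_pos r with rfl | hr
        · simp
        · rw [runWeight, if_neg hr.ne', mul_div_assoc]
          exact le_add_of_nonneg_right (by positivity)

theorem sum_two_div_two_pow_half_le (n : ℕ) :
    ∑ i ∈ Finset.range n, (2 : ℝ) / 2 ^ ((i + 2) / 2) ≤ 4 := by
  have hpairs (m : ℕ) :
      ∑ i ∈ Finset.range (2 * m), (2 : ℝ) / 2 ^ ((i + 2) / 2) = 4 - 4 / 2 ^ m := by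
    induction m with
    | zero => norm_num
    | succ m ih =>
      rw [show 2 * (m + 1) = 2 * m + 1 + 1 by ring, Finset.sum_range_succ, Finset.sum_range_succ,
        ih, show (2 * m + 1 + 2) / 2 = m + 1 by omega, show (2 * m + 2) / 2 = m + 1 by omega,
        pow_succ]
      field_simp
      ring
  calc ∑ i ∈ Finset.range n, (2 : ℝ) / 2 ^ ((i + 2) / 2)
      ≤ ∑ i ∈ Finset.range (2 * n), (2 : ℝ) / 2 ^ ((i + 2) / 2) :=
        Finset.sum_le_sum_of_subset_of_nonneg (Finset.range_subset_range.2 (by omega))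
          fun _ _ _ => by positivity
    _ = 4 - 4 / 2 ^ n := hpairs n
    _ ≤ 4 := sub_le_self _ (by positivity)

namespace List

variable {α : Type*} [DecidableEq α]

/-- Summed over the periods `i + 2 ≥ 2`; periods beyond `w.length` have empty runs. -/
noncomputable def periodPotential (w : List α) : ℝ :=
  ∑ i ∈ Finset.range w.length, runWeight (w.periodRun (i + 2)) ((i + 2) / 2)

theorem card_filter_periodRun_eq_le_periodPotential (w : List α) :
    (((Finset.range w.length).filter fun i => w.periodRun (i + 2) = (i + 2) / 2).card : ℝ) ≤
      w.periodPotential := by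
  have hfull := Finset.card_nsmul_le_sum
    ((Finset.range w.length).filter fun i => w.periodRun (i + 2) = (i + 2) / 2)
    (fun i => runWeight (w.periodRun (i + 2)) ((i + 2) / 2)) 1 fun i hi => by
      rw [(Finset.mem_filter.1 hi).2, runWeight_self (by omega)]
  rw [nsmul_one] at hfull
  exact hfull.trans (Finset.sum_le_sum_of_subset_of_nonneg (Finset.filter_subset _ _)
    fun _ _ _ => runWeight_nonneg _ _)

theorem card_filter_hasLongPeriodicPrefix_cons_le (w : List α) (L : Finset α)
    [DecidablePred fun a => (a :: w).HasLongPeriodicPrefix] :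
    ((L.filter fun a => (a :: w).HasLongPeriodicPrefix).card : ℝ) ≤ w.periodPotential + 1 := by
  set full := (Finset.range w.length).filter fun i => w.periodRun (i + 2) = (i + 2) / 2
  -- a forbidden letter repeats the previous one or completes a full run of period `≥ 2`
  have hmaps : Set.MapsTo some ↑(L.filter fun a => (a :: w).HasLongPeriodicPrefix)
      (↑(insert w[0]? (full.image fun i => w[i + 1]?)) : Set (Option α)) := by
    intro a ha
    obtain ⟨i, hi, hrun⟩ := exists_of_hasLongPeriodicPrefix_cons (Finset.mem_filter.1 ha).2
    rcases i with _ | i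
    · simp [hi]
    · have hlen := (getElem?_eq_some_iff.1 hi).1
      exact Finset.mem_insert_of_mem
        (Finset.mem_image.2 ⟨i, Finset.mem_filter.2 ⟨Finset.mem_range.2 (by omega), hrun⟩, hi⟩)
  have hcard : (L.filter fun a => (a :: w).HasLongPeriodicPrefix).card ≤ full.card + 1 :=
    (Finset.card_le_card_of_injOn some hmaps (Option.some_injective _).injOn).trans
      ((Finset.card_insert_le _ _).trans (Nat.add_le_add_right Finset.card_image_le 1))
  calc ((L.filter fun a => (a :: w).HasLongPeriodicPrefix).card : ℝ) ≤ full.card + 1 := by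
        exact_mod_cast hcard
    _ ≤ w.periodPotential + 1 := by
        gcongr
        exact card_filter_periodRun_eq_le_periodPotential w

theorem sum_runWeight_cons_le (w : List α) (A : Finset α) (i : ℕ) :
    ∑ a ∈ A, runWeight ((a :: w).periodRun (i + 1)) ((i + 1) / 2) ≤
      2 * runWeight (w.periodRun (i + 1)) ((i + 1) / 2) + 2 / 2 ^ ((i + 1) / 2) := by
  simp only [periodRun_cons]
  have hrhs := runWeight_min_succ_le (w.periodRun (i + 1)) ((i + 1) / 2)
  rcases w[i]? with _ | b
  · simpa using (runWeight_nonneg _ _).trans hrhs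
  · simp only [Option.some_inj, apply_ite (runWeight · ((i + 1) / 2)), runWeight_zero_left,
      Finset.sum_ite_eq]
    split_ifs
    · exact hrhs
    · exact (runWeight_nonneg _ _).trans hrhs

theorem sum_periodPotential_cons_le (w : List α) (A : Finset α) :
    ∑ a ∈ A, (a :: w).periodPotential ≤ 2 * w.periodPotential + 4 := by
  have hlast : runWeight (w.periodRun (w.length + 2)) ((w.length + 2) / 2) = 0 := by
    simp [periodRun_eq_zero_of_length_le (by omega : w.length ≤ w.length + 2), runWeight]
  calc ∑ a ∈ A, (a :: w).periodPotential
      = ∑ i ∈ Finset.range (w.length + 1),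
          ∑ a ∈ A, runWeight ((a :: w).periodRun (i + 2)) ((i + 2) / 2) := by
        rw [Finset.sum_comm]
        rfl
    _ ≤ ∑ i ∈ Finset.range (w.length + 1),
          (2 * runWeight (w.periodRun (i + 2)) ((i + 2) / 2) + 2 / 2 ^ ((i + 2) / 2)) :=
        Finset.sum_le_sum fun i _ => sum_runWeight_cons_le w A (i + 1)
    _ = 2 * w.periodPotential +
          ∑ i ∈ Finset.range (w.length + 1), (2 : ℝ) / 2 ^ ((i + 2) / 2) := by
        rw [Finset.sum_add_distrib, ← Finset.mul_sum, Finset.sum_range_succ, hlast, add_zero]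
        rfl
    _ ≤ 2 * w.periodPotential + 4 := by
        grw [sum_two_div_two_pow_half_le]

theorem exists_mem_not_hasLongPeriodicPrefix_cons {w : List α} (hw : w.periodPotential ≤ 4)
    {L : Finset α} (hL : 8 ≤ L.card) :
    ∃ a ∈ L, ¬(a :: w).HasLongPeriodicPrefix ∧ (a :: w).periodPotential ≤ 4 := by
  classical
  set A := L.filter fun a => ¬(a :: w).HasLongPeriodicPrefix
  have hA : (3 : ℝ) ≤ A.card := by
    have hsplit := Finset.card_filter_add_card_filter_not
      (s := L) (fun a => (a :: w).HasLongPeriodicPrefix)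
    have hbad := card_filter_hasLongPeriodicPrefix_cons_le w L
    have h8 : (8 : ℝ) ≤ L.card := by exact_mod_cast hL
    rw [← hsplit, Nat.cast_add] at h8
    linarith
  have hne : A.Nonempty := Finset.card_pos.1 (by exact_mod_cast (by linarith : (0 : ℝ) < A.card))
  have hsum : ∑ a ∈ A, (a :: w).periodPotential ≤ ∑ _a ∈ A, (4 : ℝ) := by
    rw [Finset.sum_const, nsmul_eq_mul]
    linarith [sum_periodPotential_cons_le w A]
  obtain ⟨a, ha, hle⟩ := Finset.exists_le_of_sum_le hne hsum
  exact ⟨a, (Finset.mem_filter.1 ha).1, (Finset.mem_filter.1 ha).2, hle⟩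

end List

namespace SimpleGraph.IsTree

variable {V : Type*} {G : SimpleGraph V} (hG : G.IsTree) (r : V)

noncomputable def rootPath (v : V) : G.Walk v r := (hG.existsUnique_path v r).choose

theorem isPath_rootPath (v : V) : (hG.rootPath r v).IsPath :=
  (hG.existsUnique_path v r).choose_spec.1

theorem eq_rootPath {v : V} {p : G.Walk v r} (hp : p.IsPath) : p = hG.rootPath r v :=
  (hG.existsUnique_path v r).unique hp (hG.isPath_rootPath r v)

theorem length_rootPath_lt_of_mem_support {m y : V} (hy : y ∈ (hG.rootPath r m).support)
    (hne : y ≠ m) : (hG.rootPath r y).length < (hG.rootPath r m).length := by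
  classical
  set q := hG.rootPath r m
  have hdrop : q.dropUntil y hy = hG.rootPath r y :=
    hG.eq_rootPath r ((hG.isPath_rootPath r m).dropUntil hy)
  have hlen := congrArg Walk.length (q.take_spec hy)
  rw [Walk.length_append, hdrop] at hlen
  have : (q.takeUntil y hy).length ≠ 0 := fun h0 => hne (Walk.eq_of_length_eq_zero h0).symm
  omega

theorem support_prefix_support_rootPath {x m : V} {q : G.Walk x m} (hq : q.IsPath)
    (hmin : ∀ y ∈ q.support, (hG.rootPath r m).length ≤ (hG.rootPath r y).length) :
    q.support <+: (hG.rootPath r x).support := by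
  have hm := hG.isPath_rootPath r m
  have hpath : (q.append (hG.rootPath r m)).IsPath := by
    rw [Walk.isPath_def, Walk.support_append, List.nodup_append]
    refine ⟨hq.support_nodup, hm.support_nodup.sublist (List.tail_sublist _), ?_⟩
    rintro y hyq _ hy rfl
    have hnodup := hm.support_nodup
    rw [← Walk.cons_tail_support] at hnodup
    have hne : y ≠ m := fun h => (List.nodup_cons.1 hnodup).1 (h ▸ hy)
    exact (hmin y hyq).not_gt
      (hG.length_rootPath_lt_of_mem_support r (List.mem_of_mem_tail hy) hne)
  rw [← hG.eq_rootPath r hpath, Walk.support_append]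
  exact List.prefix_append _ _

theorem exists_prefix_rootPath_of_isPath {u w : V} {p : G.Walk u w} (hp : p.IsPath) :
    ∃ y z : List V, y <+: p.support ∧ y <+: (hG.rootPath r u).support ∧
      z <+: p.support.reverse ∧ z <+: (hG.rootPath r w).support ∧
      y.length + z.length = p.support.length + 1 := by
  classical
  -- at the vertex `m` of `p` closest to `r`, both halves of `p` turn into root paths
  obtain ⟨m, hm, hmin⟩ := p.support.toFinset.exists_min_image
    (fun v => (hG.rootPath r v).length) ⟨u, by simp⟩
  rw [List.mem_toFinset] at hm
  have hmin' (y : V) (hy : y ∈ p.support) := hmin y (List.mem_toFinset.2 hy)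
  refine ⟨(p.takeUntil m hm).support, (p.dropUntil m hm).reverse.support,
    p.support_takeUntil_prefix_support hm,
    hG.support_prefix_support_rootPath r (hp.takeUntil hm)
      fun y hy => hmin' y (p.support_takeUntil_subset_support hm hy), ?_,
    hG.support_prefix_support_rootPath r (hp.dropUntil hm).reverse
      fun y hy => hmin' y (p.support_dropUntil_subset_support hm (by simpa using hy)), ?_⟩
  · rw [Walk.support_reverse]
    exact List.reverse_prefix.2 (p.support_dropUntil_suffix_support hm)
  · have := congrArg Walk.length (p.take_spec hm)
    simp only [Walk.length_support, Walk.length_reverse, Walk.length_append] at this ⊢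
    omega

theorem map_support_eq_foldr_of_isPath {β : Type*} (next : V → List β → β) {u : V}
    {q : G.Walk u r} (hq : q.IsPath) :
    q.support.map (fun v => next v ((hG.rootPath r v).support.tail.foldr
      (fun x w => next x w :: w) [])) = q.support.foldr (fun x w => next x w :: w) [] := by
  induction q with
  | nil =>
    simp only [Walk.support_nil, List.map_cons, List.map_nil, List.foldr_cons, List.foldr_nil]
    rw [← hG.eq_rootPath _ Walk.IsPath.nil]
    rfl
  | cons hadj q ih =>
    rw [Walk.support_cons, List.map_cons, ih hq.of_cons, ← hG.eq_rootPath _ hq]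
    rfl

theorem exists_coloring_forall_rootPath_mem {β : Type*} (L : V → Set β) (S : Set (List β))
    (hS : [] ∈ S) (hext : ∀ v, ∀ w ∈ S, ∃ a ∈ L v, a :: w ∈ S) :
    ∃ f : V → β, (∀ v, f v ∈ L v) ∧ ∀ v, (hG.rootPath r v).support.map f ∈ S := by
  have hnext (v : V) (w : List β) : ∃ a, w ∈ S → a ∈ L v ∧ a :: w ∈ S := by
    by_cases hw : w ∈ S
    · obtain ⟨a, ha, haw⟩ := hext v w hw
      exact ⟨a, fun _ => ⟨ha, haw⟩⟩
    · obtain ⟨a, -⟩ := hext v [] hS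
      exact ⟨a, fun h => absurd h hw⟩
  choose next hnext using hnext
  have hword (l : List V) : l.foldr (fun x w => next x w :: w) [] ∈ S := by
    induction l with
    | nil => exact hS
    | cons x l ih => exact (hnext x _ ih).2
  refine ⟨fun v => next v ((hG.rootPath r v).support.tail.foldr (fun x w => next x w :: w) []),
    fun v => (hnext v _ (hword _)).1, fun v => ?_⟩
  rw [hG.map_support_eq_foldr_of_isPath r next (hG.isPath_rootPath r v)]
  exact hword _

end SimpleGraph.IsTree

theorem SimpleGraph.IsTree.xCubeFree_of_forall_not_hasLongPeriodicPrefix {V : Type}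
    {G : SimpleGraph V} (hG : G.IsTree) (r : V) {f : V → ℕ}
    (hf : ∀ v, ¬((hG.rootPath r v).support.map f).HasLongPeriodicPrefix) : XCubeFree G f := by
  intro u w p hp x _ hcube
  obtain ⟨y, z, hyp, hyu, hzp, hzw, hlen⟩ := hG.exists_prefix_rootPath_of_isPath r hp
  have hlen3 : p.support.length = 3 * x.length := by
    have := congrArg List.length hcube
    simp only [List.length_map, List.length_append] at this
    omega
  by_cases hy : x.length + x.length / 2 < y.length
  · exact hf u (List.hasLongPeriodicPrefix_of_prefix_cube (hcube ▸ hyp.map f) (hyu.map f)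
      (by simpa using hy))
  · have hzx : z.map f <+: x.reverse ++ x.reverse ++ x.reverse := by
      have := hzp.map f
      rwa [List.map_reverse, hcube, List.reverse_append, List.reverse_append,
        ← List.append_assoc] at this
    exact hf w (List.hasLongPeriodicPrefix_of_prefix_cube hzx (hzw.map f)
      (by simp only [List.length_map, List.length_reverse]; omega))

/-- Every finite tree admits, for any lists of size at least `8`, an `x³`-free
coloring chosen from the lists. -/
theorem x_cube_free_choice_trees_eight :
    ∀ (V : Type) [Fintype V] (G : SimpleGraph V),
      G.IsTree →
      ∀ L : V → Finset ℕ, (∀ v : V, 8 ≤ (L v).card) →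
      ∃ f : V → ℕ, (∀ v : V, f v ∈ L v) ∧ XCubeFree G f := by
  intro V _ G hG L hL
  obtain ⟨r⟩ := hG.connected.nonempty
  obtain ⟨f, hfL, hfS⟩ := hG.exists_coloring_forall_rootPath_mem r (fun v => (L v : Set ℕ))
    {w | ¬w.HasLongPeriodicPrefix ∧ w.periodPotential ≤ 4}
    ⟨List.not_hasLongPeriodicPrefix_nil, by simp [List.periodPotential]⟩
    fun v w hw => List.exists_mem_not_hasLongPeriodicPrefix_cons hw.2 (hL v)
  exact ⟨f, hfL, hG.xCubeFree_of_forall_not_hasLongPeriodicPrefix r fun v => (hfS v).1⟩
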